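/- arXiv:1601.06266 — 2 statements merged into one kernel-verified Lean document; each statement's English description precedes it below -/
import Mathlib

section
/- Let (v_n) be a sequence of nonnegative reals, (γ_n) a nonincreasing sequence of positive reals converging to 0, and α, β > 0. Suppose for all n ≥ n_0 that v_{n+1} ≤ v_n + γ_{n+1}(β − α v_n). Let n_1 = max(n_0, min{n : γ_n < 1/α}). Then for all n ≥ n_1, v_n ≤ max(β/α, v_{n_1}). In particular, sup_n v_n < ∞. -/
open Filter

theorem stmt0 (v γ : ℕ → ℝ) (α β : ℝ) (n₀ : ℕ)
    (hv : ∀ n, 0 ≤ v n) (hγpos : ∀ n, 0 < γ n) (hγmono : Antitone γ)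
    (hγlim : Tendsto γ atTop (nhds 0)) (hα : 0 < α) (hβ : 0 < β)
    (hrec : ∀ n ≥ n₀, v (n + 1) ≤ v n + γ (n + 1) * (β - α * v n)) :
    (∀ n ≥ max n₀ (sInf {n | γ n < 1 / α}),
      v n ≤ max (β / α) (v (max n₀ (sInf {n | γ n < 1 / α})))) ∧
    BddAbove (Set.range v) := by
  set S : Set ℕ := {n | γ n < 1 / α} with hS
  set n₁ : ℕ := max n₀ (sInf S) with hn₁
  have hαinv : (0:ℝ) < 1 / α := by positivity
  have hex : ∃ n, n ∈ S := by
    have h := (hγlim.eventually_lt_const hαinv).exists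
    exact h
  have hmem : sInf S ∈ S := Nat.sInf_mem hex
  set M : ℝ := max (β / α) (v n₁) with hM
  have hβαM : β ≤ α * M := by
    have h1 : β / α ≤ M := le_max_left _ _
    calc β = α * (β / α) := by field_simp
    _ ≤ α * M := by nlinarith
  have key : ∀ n ≥ n₁, v n ≤ M := by
    intro n hn
    induction n, hn using Nat.le_induction with
    | base => exact le_max_right _ _
    | succ n hn ih =>
      have hc : γ (n + 1) < 1 / α := lt_of_le_of_lt
        (hγmono (le_trans (le_max_right _ _) (le_trans hn (Nat.le_succ n)))) hmem
      have hαc : α * γ (n + 1) ≤ 1 := by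
        calc α * γ (n + 1) = γ (n + 1) * α := mul_comm _ _
        _ ≤ 1 := (le_div_iff₀ hα).mp hc.le
      have hcn : 0 < γ (n + 1) := hγpos (n + 1)
      have hrec' := hrec n (le_trans (le_max_left _ _) hn)
      nlinarith [mul_nonneg (sub_nonneg.2 hαc) (sub_nonneg.2 ih), hcn.le,
        mul_le_mul_of_nonneg_left hβαM hcn.le]
  refine ⟨key, ?_⟩
  have hne : (Finset.range (n₁ + 1)).Nonempty := ⟨0, by simp⟩
  refine ⟨max M ((Finset.range (n₁ + 1)).sup' hne v), ?_⟩
  rintro x ⟨n, rfl⟩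
  rcases le_or_gt n₁ n with h | h
  · exact le_trans (key n h) (le_max_left _ _)
  · exact le_trans (Finset.le_sup' v (Finset.mem_range.2 (by omega))) (le_max_right _ _)
end

section
/- Let (γ_n) and (ε_n) be nonincreasing positive sequences converging to 0 with Σγ_n = ∞. Define λ(γ,ε) = −limsup_{n→∞} log(max(γ_n, ε_n)) / Σ_{k=1}^n γ_k. If γ_n ~ A/n and ε_n ~ B/n^c with A, B > 0 and c ≥ 0, then λ(γ,ε) = min(c,1)/A. -/
open Filter Finset Real

-- auxiliary: log n → ∞
lemma aux_log_atTop : Tendsto (fun n : ℕ => Real.log n) atTop atTop :=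
  Real.tendsto_log_atTop.comp tendsto_natCast_atTop_atTop

lemma aux_harm_cast (n : ℕ) :
    (harmonic n : ℝ) = ∑ i ∈ Finset.range n, (((1 + i : ℕ) : ℝ))⁻¹ := by
  rw [harmonic]
  push_cast
  refine Finset.sum_congr rfl fun i _ => by ring_nf

lemma aux_harm_atTop : Tendsto (fun n : ℕ => (harmonic n : ℝ)) atTop atTop := by
  have h := Real.tendsto_harmonic_sub_log
  have := h.add_atTop aux_log_atTop
  simpa using this

lemma aux_harm_div_log :
    Tendsto (fun n : ℕ => (harmonic n : ℝ) / Real.log n) atTop (nhds 1) := by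
  have h0 : Tendsto (fun n : ℕ => ((harmonic n : ℝ) - Real.log n) / Real.log n)
      atTop (nhds 0) := Real.tendsto_harmonic_sub_log.div_atTop aux_log_atTop
  have h1 := h0.add_const 1
  rw [zero_add] at h1
  refine h1.congr' ?_
  filter_upwards [eventually_ge_atTop 2] with n hn
  have hl : Real.log n ≠ 0 := by
    have : (1:ℝ) < n := by exact_mod_cast Nat.lt_of_lt_of_le one_lt_two hn
    exact (Real.log_pos this).ne'
  field_simp
  ring

lemma aux_sum_div_log (γ : ℕ → ℝ) (A : ℝ) (hA : 0 < A)
    (hγA : Tendsto (fun n => γ n * (n : ℝ) / A) atTop (nhds 1)) :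
    Tendsto (fun n => (∑ k ∈ Finset.Icc 1 n, γ k) / Real.log n) atTop (nhds A) := by
  set f : ℕ → ℝ := fun i => γ (1 + i) - A * (((1 + i : ℕ) : ℝ))⁻¹ with hf
  set g : ℕ → ℝ := fun i => (((1 + i : ℕ) : ℝ))⁻¹ with hg
  have hgnn : 0 ≤ g := fun i => by positivity
  have hGsum : ∀ n, ∑ i ∈ Finset.range n, g i = (harmonic n : ℝ) := fun n =>
    (aux_harm_cast n).symm
  have hGdiv : Tendsto (fun n => ∑ i ∈ Finset.range n, g i) atTop atTop := by
    simpa only [hGsum] using aux_harm_atTop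
  -- f = o(g)
  have hfo : f =o[atTop] g := by
    rw [Asymptotics.isLittleO_iff]
    intro δ hδ
    have h1 : Tendsto (fun i : ℕ => γ (1 + i) * ((1 + i : ℕ) : ℝ) / A) atTop (nhds 1) := by
      have h := hγA.comp (tendsto_add_atTop_nat 1)
      refine h.congr fun i => ?_
      simp only [Function.comp]
      rw [Nat.add_comm 1 i]
    have h2 : ∀ᶠ i : ℕ in atTop, |γ (1 + i) * ((1 + i : ℕ) : ℝ) / A - 1| ≤ δ / A := by
      have h := (h1.sub_const 1).abs
      rw [sub_self, abs_zero] at h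
      exact (h.eventually_lt_const (by positivity)).mono fun i h => h.le
    filter_upwards [h2] with i hi
    have hpos : (0:ℝ) < ((1 + i : ℕ) : ℝ) := by positivity
    have hfi : f i = (γ (1 + i) * ((1 + i : ℕ) : ℝ) / A - 1) * A * (((1 + i : ℕ) : ℝ))⁻¹ := by
      simp only [hf]
      field_simp
    simp only [hg, Real.norm_eq_abs]
    rw [hfi, abs_of_pos (inv_pos.2 hpos)]
    calc |(γ (1 + i) * ((1 + i : ℕ) : ℝ) / A - 1) * A * (((1 + i : ℕ) : ℝ))⁻¹|
        = |γ (1 + i) * ((1 + i : ℕ) : ℝ) / A - 1| * A * (((1 + i : ℕ) : ℝ))⁻¹ := by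
          rw [abs_mul, abs_mul, abs_of_pos hA, abs_of_pos (inv_pos.2 hpos)]
      _ ≤ δ / A * A * (((1 + i : ℕ) : ℝ))⁻¹ := by
          gcongr
      _ = δ * (((1 + i : ℕ) : ℝ))⁻¹ := by rw [div_mul_cancel₀ _ hA.ne']
  have hsum := hfo.sum_range hgnn hGdiv
  have hT : Tendsto (fun n => (∑ i ∈ Finset.range n, f i) / (harmonic n : ℝ))
      atTop (nhds 0) := by
    simpa only [hGsum] using hsum.tendsto_div_nhds_zero
  -- key identity
  have hkey : ∀ n, ∑ k ∈ Finset.Icc 1 n, γ k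
      = (∑ i ∈ Finset.range n, f i) + A * (harmonic n : ℝ) := by
    intro n
    have h1 : ∑ k ∈ Finset.Icc 1 n, γ k = ∑ i ∈ Finset.range n, γ (1 + i) := by
      rw [← Finset.Ico_add_one_right_eq_Icc, Finset.sum_Ico_eq_sum_range]
      simp
    rw [h1, aux_harm_cast, Finset.mul_sum, ← Finset.sum_add_distrib]
    refine Finset.sum_congr rfl fun i _ => by simp [hf]
  -- combine
  have hTlog : Tendsto (fun n => (∑ i ∈ Finset.range n, f i) / Real.log n)
      atTop (nhds 0) := by
    have := hT.mul aux_harm_div_log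
    rw [zero_mul] at this
    refine this.congr' ?_
    filter_upwards [eventually_ge_atTop 1] with n hn
    have h0 : (harmonic n : ℝ) ≠ 0 := by
      exact_mod_cast (harmonic_pos (Nat.one_le_iff_ne_zero.mp hn)).ne'
    field_simp
  have hAh : Tendsto (fun n => A * ((harmonic n : ℝ) / Real.log n)) atTop (nhds A) := by
    simpa using aux_harm_div_log.const_mul A
  have := hTlog.add hAh
  rw [zero_add] at this
  refine this.congr fun n => ?_
  rw [hkey n]
  ring

lemma aux_log_div (u : ℕ → ℝ) (C c : ℝ) (hC : 0 < C) (hu : ∀ n, 0 < u n)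
    (h : Tendsto (fun n => u n * (n : ℝ) ^ c / C) atTop (nhds 1)) :
    Tendsto (fun n => Real.log (u n) / Real.log n) atTop (nhds (-c)) := by
  have h0 : Tendsto (fun n => Real.log (u n * (n : ℝ) ^ c / C)) atTop (nhds 0) := by
    have := (Real.continuousAt_log one_ne_zero).tendsto.comp h
    simpa [Function.comp_def, Real.log_one] using this
  have h1 := ((h0.add_const (Real.log C)).div_atTop aux_log_atTop).sub_const c
  rw [zero_sub] at h1
  refine h1.congr' ?_
  filter_upwards [eventually_ge_atTop 2] with n hn
  have hn0 : (0:ℝ) < n := by positivity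
  have hl : Real.log n ≠ 0 := by
    have : (1:ℝ) < n := by exact_mod_cast Nat.lt_of_lt_of_le one_lt_two hn
    exact (Real.log_pos this).ne'
  have e : Real.log (u n * (n : ℝ) ^ c / C)
      = Real.log (u n) + c * Real.log n - Real.log C := by
    rw [Real.log_div (mul_pos (hu n) (Real.rpow_pos_of_pos hn0 c)).ne' hC.ne',
      Real.log_mul (hu n).ne' (Real.rpow_pos_of_pos hn0 c).ne', Real.log_rpow hn0]
  rw [e]
  field_simp
  ring

lemma aux_log_max (a b : ℝ) (ha : 0 < a) (hb : 0 < b) :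
    Real.log (max a b) = max (Real.log a) (Real.log b) := by
  rcases le_total a b with h | h
  · rw [max_eq_right h, max_eq_right (Real.log_le_log ha h)]
  · rw [max_eq_left h, max_eq_left (Real.log_le_log hb h)]


theorem stmt1 (γ ε : ℕ → ℝ) (A B c : ℝ) (hA : 0 < A) (hB : 0 < B) (hc : 0 ≤ c)
    (hγpos : ∀ n, 0 < γ n) (hεpos : ∀ n, 0 < ε n)
    (hγmono : Antitone γ) (hεmono : Antitone ε)
    (hγlim : Tendsto γ atTop (nhds 0)) (hεlim : Tendsto ε atTop (nhds 0))
    (hdiv : Tendsto (fun n => ∑ k ∈ Finset.Icc 1 n, γ k) atTop atTop)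
    (hγA : Tendsto (fun n => γ n * (n : ℝ) / A) atTop (nhds 1))
    (hεB : Tendsto (fun n => ε n * (n : ℝ) ^ c / B) atTop (nhds 1)) :
    -Filter.limsup
        (fun n => Real.log (max (γ n) (ε n)) / ∑ k ∈ Finset.Icc 1 n, γ k) atTop
      = min c 1 / A := by
  have hγ' : Tendsto (fun n => Real.log (γ n) / Real.log n) atTop (nhds (-1)) := by
    refine aux_log_div γ A 1 hA hγpos (hγA.congr fun n => ?_)
    rw [Real.rpow_one]
  have hε' : Tendsto (fun n => Real.log (ε n) / Real.log n) atTop (nhds (-c)) :=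
    aux_log_div ε B c hB hεpos hεB
  have hmax : Tendsto (fun n => Real.log (max (γ n) (ε n)) / Real.log n) atTop
      (nhds (max (-1) (-c))) := by
    refine (hγ'.max hε').congr' ?_
    filter_upwards [eventually_ge_atTop 2] with n hn
    have hl : (0:ℝ) ≤ Real.log n := by
      apply Real.log_nonneg
      exact_mod_cast Nat.one_le_of_lt (Nat.lt_of_lt_of_le one_lt_two hn)
    rw [max_div_div_right hl, aux_log_max _ _ (hγpos n) (hεpos n)]
  have hS := aux_sum_div_log γ A hA hγA
  have hinv : Tendsto (fun n : ℕ => Real.log n / ∑ k ∈ Finset.Icc 1 n, γ k) atTop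
      (nhds A⁻¹) := by
    refine (hS.inv₀ hA.ne').congr fun n => ?_
    rw [inv_div]
  have hfin : Tendsto
      (fun n => Real.log (max (γ n) (ε n)) / ∑ k ∈ Finset.Icc 1 n, γ k) atTop
      (nhds (max (-1) (-c) * A⁻¹)) := by
    refine (hmax.mul hinv).congr' ?_
    filter_upwards [eventually_ge_atTop 2] with n hn
    have hl : Real.log n ≠ 0 := by
      have : (1:ℝ) < n := by exact_mod_cast Nat.lt_of_lt_of_le one_lt_two hn
      exact (Real.log_pos this).ne'
    have hSn : (0:ℝ) < ∑ k ∈ Finset.Icc 1 n, γ k := by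
      refine Finset.sum_pos (fun k _ => hγpos k) ⟨1, ?_⟩
      simp [Finset.mem_Icc]
      omega
    field_simp
  rw [hfin.limsup_eq]
  have hm : max (-1 : ℝ) (-c) = -(min 1 c) := by
    rw [min_def, max_def]
    split_ifs with h1 h2 h3 <;> first | rfl | linarith
  rw [hm, min_comm]
  field_simp
end
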